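/- arXiv:math/0611563 — 3 statements merged into one kernel-verified Lean document; each statement's English description precedes it below -/
import Mathlib

section
/- Comparison lemma: let η: [0,∞) → ℝ be continuous with η(t) ≥ B̃ for all t, and let x, x̃: [0,∞) → [0,1] solve x'(t) = (η(t) − a·x(t))(1 − x(t)) with x(0) = π ≥ 0 and x̃'(t) = (B̃ − a·x̃(t))(1 − x̃(t)) with x̃(0) = 0, where a = λ₁ − λ₀. If B̃ − a ≥ 0, then x(t) ≥ x̃(t) for all t ≥ 0. -/
/-- Comparison lemma: if `η ≥ B̃` is continuous, `x` solves
`x' = (η(t) − a·x)(1 − x)` with `x(0) = π ≥ 0`, `x̃` solves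
`x̃' = (B̃ − a·x̃)(1 − x̃)` with `x̃(0) = 0`, both taking values in `[0,1]`,
and `B̃ − a ≥ 0` where `a = λ₁ − λ₀`, then `x(t) ≥ x̃(t)` for all `t ≥ 0`. -/
theorem ode_comparison
    (l0 l1 B π : ℝ) (hB : 0 ≤ B) (hBa : B - (l1 - l0) ≥ 0) (hπ : 0 ≤ π)
    (η : ℝ → ℝ) (hηc : Continuous η) (hηB : ∀ t, B ≤ η t)
    (x xt : ℝ → ℝ)
    (hxrange : ∀ t ∈ Set.Ici (0:ℝ), x t ∈ Set.Icc (0:ℝ) 1)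
    (hxtrange : ∀ t ∈ Set.Ici (0:ℝ), xt t ∈ Set.Icc (0:ℝ) 1)
    (hx0 : x 0 = π) (hxt0 : xt 0 = 0)
    (hx : ∀ t ∈ Set.Ici (0:ℝ),
      HasDerivWithinAt x ((η t - (l1 - l0) * x t) * (1 - x t)) (Set.Ici 0) t)
    (hxt : ∀ t ∈ Set.Ici (0:ℝ),
      HasDerivWithinAt xt ((B - (l1 - l0) * xt t) * (1 - xt t)) (Set.Ici 0) t) :
    ∀ t ≥ (0:ℝ), xt t ≤ x t := by
  intro t ht
  set a : ℝ := l1 - l0 with ha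
  set K : ℝ := B + 3 * |a| + 1 with hK
  -- For every ε > 0, we show xt t ≤ x t + ε * exp (K * t)
  have key : ∀ ε > (0:ℝ), xt t ≤ x t + ε * Real.exp (K * t) := by
    intro ε hε
    -- apply the fencing theorem on [0, t]
    have hcf : ContinuousOn xt (Set.Icc 0 t) := fun s hs =>
      ((hxt s hs.1).continuousWithinAt).mono (fun y hy => hy.1)
    have hcx : ContinuousOn x (Set.Icc 0 t) := fun s hs =>
      ((hx s hs.1).continuousWithinAt).mono (fun y hy => hy.1)
    have hcB : ContinuousOn (fun s => x s + ε * Real.exp (K * s)) (Set.Icc 0 t) :=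
      hcx.add ((continuous_const.mul ((Real.continuous_exp).comp
        (continuous_const.mul continuous_id))).continuousOn)
    have hexp : ∀ s : ℝ, HasDerivAt (fun s => Real.exp (K * s)) (K * Real.exp (K * s)) s := by
      intro s
      have h1 : HasDerivAt (fun s : ℝ => K * s) K s := by
        simpa using (hasDerivAt_id s).const_mul K
      simpa [mul_comm] using h1.exp
    have main :=
      image_le_of_deriv_right_lt_deriv_boundary'
        (f := xt) (f' := fun s => (B - a * xt s) * (1 - xt s))
        (a := 0) (b := t) hcf
        (fun s hs => (hxt s hs.1).mono (fun y hy => le_trans hs.1 hy))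
        (B := fun s => x s + ε * Real.exp (K * s))
        (B' := fun s => (η s - a * x s) * (1 - x s) + ε * (K * Real.exp (K * s)))
        (by
          simp only [hxt0, hx0, mul_zero, Real.exp_zero, mul_one]
          positivity)
        hcB
        (fun s hs =>
          ((hx s hs.1).mono (fun y hy => le_trans hs.1 hy)).add
            (((hexp s).hasDerivWithinAt).const_mul ε))
        ?_ (Set.mem_Icc.2 ⟨ht, le_refl t⟩)
    · exact main
    · intro s hs heq
      have hs0 : s ∈ Set.Ici (0:ℝ) := hs.1
      obtain ⟨hu0, hu1⟩ := hxtrange s hs0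
      obtain ⟨hv0, hv1⟩ := hxrange s hs0
      have hδ : (0:ℝ) < ε * Real.exp (K * s) := by positivity
      have hηs := hηB s
      have habs1 : a ≤ |a| := le_abs_self a
      have habs2 : -a ≤ |a| := neg_le_abs a
      have habs0 : (0:ℝ) ≤ |a| := abs_nonneg a
      set u := xt s
      set v := x s
      set δ := ε * Real.exp (K * s) with hδdef
      have huv : u = v + δ := heq
      have hδ1 : δ ≤ 1 := by
        have : v + δ ≤ 1 := huv ▸ hu1
        linarith
      show (B - a * u) * (1 - u) < (η s - a * v) * (1 - v) + ε * (K * Real.exp (K * s))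
      have hKδ : ε * (K * Real.exp (K * s)) = K * δ := by rw [hδdef]; ring
      rw [hKδ, huv, hK]
      nlinarith [mul_nonneg (sub_nonneg.2 hηs) (sub_nonneg.2 hv1),
        mul_pos hδ (show (0:ℝ) < 1 by norm_num),
        mul_le_mul_of_nonneg_right habs1 hδ.le,
        mul_le_mul_of_nonneg_right habs2 hδ.le,
        mul_nonneg hB hδ.le,
        mul_le_mul_of_nonneg_left hδ1 (mul_nonneg habs0 hδ.le),
        mul_nonneg (mul_nonneg habs0 hδ.le) hv0,
        mul_le_mul_of_nonneg_left hv1 (mul_nonneg habs0 hδ.le),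
        mul_nonneg hδ.le hv0, mul_le_mul_of_nonneg_right hv1 hδ.le]
  -- take ε → 0
  by_contra hcon
  push_neg at hcon
  set ε := (xt t - x t) / (2 * Real.exp (K * t)) with hεdef
  have hε : 0 < ε := div_pos (by linarith) (by positivity)
  have := key ε hε
  rw [hεdef, div_mul_eq_mul_div, mul_comm (2:ℝ), ← div_div,
    mul_div_assoc] at this
  have hexp : Real.exp (K * t) ≠ 0 := (Real.exp_pos _).ne'
  rw [div_self hexp, mul_one] at this
  linarith
end

section
/- For the hyperexponential prior with rates μ₁ > μ₂ > … > μ_n > 0 and λ₁ − λ₀ > μ_n, the deterministic path components satisfy: on {π ∈ D : π_n ≠ 0}, lim_{t→∞} x_n(t,π) = (λ₁ − λ₀ − μ_n)/(λ₁ − λ₀) and lim_{t→∞} x_Δ(t,π) = μ_n/(λ₁ − λ₀), while lim_{t→∞} x_i(t,π) = 0 for i < n. -/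
/-!
Write `r = λ₁ - λ₀` and `m = μ_n < r`, and multiply every numerator and the normaliser `N`
by `e^{m t}`. Each rescaled term has an explicit limit: `π_k e^{(m - μ_k) t} → π_n δ_{kn}`,
the atom `π e^{(m - r) t} → 0`, and, computing the elementary integral,
`e^{(m - r) t} ∫₀ᵗ e^{r u} μ_k e^{-μ_k u} du → δ_{kn} m / (r - m)`. So
`e^{m t} N(t) → π_n r / (r - m) ≠ 0`, and each component tends to the ratio of the limits.
-/

open Filter Topology intervalIntegral

namespace Real

lemma tendsto_exp_neg_mul_atTop_nhds_zero {b : ℝ} (hb : 0 < b) :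
    Tendsto (fun t : ℝ => exp (-b * t)) atTop (𝓝 0) := by
  simpa using tendsto_rpow_mul_exp_neg_mul_atTop_nhds_zero 0 b hb

lemma tendsto_exp_mul_mul_exp_neg_mul {m c : ℝ} (h : m < c) :
    Tendsto (fun t => exp (m * t) * exp (-c * t)) atTop (𝓝 0) :=
  (tendsto_exp_neg_mul_atTop_nhds_zero (sub_pos.2 h)).congr fun t => by
    rw [← exp_add]; ring_nf

lemma integral_exp_mul {a : ℝ} (ha : a ≠ 0) (t : ℝ) :
    ∫ u in (0 : ℝ)..t, exp (a * u) = (exp (a * t) - 1) / a := by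
  rw [integral_comp_mul_left (fun u => exp u) ha, integral_exp]
  simp [div_eq_inv_mul]

lemma integral_exp_mul_mul_exp_neg_mul (r c t : ℝ) :
    ∫ u in (0 : ℝ)..t, exp (r * u) * (c * exp (-c * u)) =
      c * ∫ u in (0 : ℝ)..t, exp ((r - c) * u) := by
  rw [← integral_const_mul]
  congr 1 with u
  rw [mul_left_comm, ← exp_add]
  ring_nf

lemma tendsto_exp_neg_mul_mul_integral_exp_mul_self {a : ℝ} (ha : 0 < a) :
    Tendsto (fun t => exp (-a * t) * ∫ u in (0 : ℝ)..t, exp (a * u)) atTop (𝓝 a⁻¹) := by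
  have h := ((tendsto_exp_neg_mul_atTop_nhds_zero ha).const_sub 1).div_const a
  rw [sub_zero, one_div] at h
  refine h.congr fun t => ?_
  rw [integral_exp_mul ha.ne', mul_div_assoc', mul_sub, ← exp_add]
  simp

lemma tendsto_exp_neg_mul_mul_integral_exp_mul {a b : ℝ} (hb : 0 < b) (hab : a < b) :
    Tendsto (fun t => exp (-b * t) * ∫ u in (0 : ℝ)..t, exp (a * u)) atTop (𝓝 0) := by
  rcases eq_or_ne a 0 with rfl | ha
  · simpa [mul_comm] using tendsto_rpow_mul_exp_neg_mul_atTop_nhds_zero 1 b hb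
  · have h := ((tendsto_exp_neg_mul_atTop_nhds_zero (sub_pos.2 hab)).sub
      (tendsto_exp_neg_mul_atTop_nhds_zero hb)).div_const a
    rw [sub_zero, zero_div] at h
    refine h.congr fun t => ?_
    rw [integral_exp_mul ha, mul_div_assoc', mul_sub, ← exp_add]
    ring_nf

end Real

lemma Filter.Tendsto.div_of_mul_left {f g s : ℝ → ℝ} {l : Filter ℝ} {a b : ℝ}
    (hs : ∀ t, s t ≠ 0) (hf : Tendsto (fun t => s t * f t) l (𝓝 a))
    (hg : Tendsto (fun t => s t * g t) l (𝓝 b)) (hb : b ≠ 0) :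
    Tendsto (fun t => f t / g t) l (𝓝 (a / b)) :=
  (hf.div hg hb).congr fun t => mul_div_mul_left _ _ (hs t)

namespace Hyperexponential

open Real

variable {n : ℕ} {μ : Fin (n + 1) → ℝ}

lemma tendsto_scaled_phase_term (hμ : StrictAnti μ) (p : ℝ) (k : Fin (n + 1)) :
    Tendsto (fun t => exp (μ (Fin.last n) * t) * (p * exp (-μ k * t))) atTop
      (𝓝 (if k = Fin.last n then p else 0)) := by
  simp_rw [mul_left_comm _ p]
  split_ifs with hk
  · subst hk
    simp [← exp_add]
  · simpa using (tendsto_exp_mul_mul_exp_neg_mul (hμ (Fin.lt_last_iff_ne_last.2 hk))).const_mul p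

lemma tendsto_scaled_phase_sum (hμ : StrictAnti μ) (p : Fin (n + 1) → ℝ) :
    Tendsto (fun t => exp (μ (Fin.last n) * t) * ∑ k, p k * exp (-μ k * t)) atTop
      (𝓝 (p (Fin.last n))) := by
  simp_rw [Finset.mul_sum]
  simpa using tendsto_finsetSum Finset.univ fun k _ => tendsto_scaled_phase_term hμ (p k) k

lemma tendsto_scaled_integral_term (hμ : StrictAnti μ) {r : ℝ} (hr : μ (Fin.last n) < r)
    (k : Fin (n + 1)) :
    Tendsto (fun t => exp (μ (Fin.last n) * t) * (exp (-r * t) *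
        ∫ u in (0 : ℝ)..t, exp (r * u) * (μ k * exp (-μ k * u)))) atTop
      (𝓝 (if k = Fin.last n then μ (Fin.last n) / (r - μ (Fin.last n)) else 0)) := by
  have hgap : 0 < r - μ (Fin.last n) := sub_pos.2 hr
  have hrewrite : ∀ t, exp (μ (Fin.last n) * t) * (exp (-r * t) *
        ∫ u in (0 : ℝ)..t, exp (r * u) * (μ k * exp (-μ k * u))) =
      μ k * (exp (-(r - μ (Fin.last n)) * t) * ∫ u in (0 : ℝ)..t, exp ((r - μ k) * u)) := by
    intro t
    rw [integral_exp_mul_mul_exp_neg_mul, ← mul_assoc, ← exp_add]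
    ring_nf
  simp_rw [hrewrite]
  split_ifs with hk
  · subst hk
    simpa [div_eq_mul_inv] using (tendsto_exp_neg_mul_mul_integral_exp_mul_self hgap).const_mul _
  · have hlt : r - μ k < r - μ (Fin.last n) :=
      sub_lt_sub_left (hμ (Fin.lt_last_iff_ne_last.2 hk)) r
    simpa using (tendsto_exp_neg_mul_mul_integral_exp_mul hgap hlt).const_mul (μ k)

lemma tendsto_scaled_change_weight (hμ : StrictAnti μ) {r : ℝ} (hr : μ (Fin.last n) < r)
    (p : Fin (n + 1) → ℝ) (pΔ : ℝ) :
    Tendsto (fun t => exp (μ (Fin.last n) * t) * (exp (-r * t) * (pΔ + ∑ k, p k *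
        ∫ u in (0 : ℝ)..t, exp (r * u) * (μ k * exp (-μ k * u))))) atTop
      (𝓝 (p (Fin.last n) * (μ (Fin.last n) / (r - μ (Fin.last n))))) := by
  have hatom := (tendsto_exp_mul_mul_exp_neg_mul hr).const_mul pΔ
  have hsum := tendsto_finsetSum Finset.univ fun k _ =>
    (tendsto_scaled_integral_term hμ hr k).const_mul (p k)
  simp only [mul_ite, mul_zero, Finset.sum_ite_eq', Finset.mem_univ, if_true] at hsum
  have h := hatom.add hsum
  rw [mul_zero, zero_add] at h
  refine h.congr fun t => ?_
  simp only [mul_add, Finset.mul_sum]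
  congr 1
  · ring
  · exact Finset.sum_congr rfl fun k _ => by ac_rfl

end Hyperexponential

theorem hyperexponential_limits_supercritical_general
    {n : ℕ} (μ : Fin (n + 1) → ℝ) (hμanti : StrictAnti μ)
    (hμpos : 0 < μ (Fin.last n))
    (l0 l1 : ℝ)
    (hrate : μ (Fin.last n) < l1 - l0)
    (π : Fin (n + 1) → ℝ) (πΔ : ℝ)
    (hπn : 0 < π (Fin.last n))
    (N : ℝ → ℝ)
    (hN : ∀ t, N t = (∑ k, π k * Real.exp (-μ k * t)) +
      Real.exp (-(l1 - l0) * t) *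
        (πΔ + ∑ k, π k * ∫ u in (0:ℝ)..t,
          Real.exp ((l1 - l0) * u) * (μ k * Real.exp (-μ k * u))))
    (x : Fin (n + 1) → ℝ → ℝ)
    (hx : ∀ i t, x i t = π i * Real.exp (-μ i * t) / N t)
    (xΔ : ℝ → ℝ)
    (hxΔ : ∀ t, xΔ t = Real.exp (-(l1 - l0) * t) *
      (πΔ + ∑ k, π k * ∫ u in (0:ℝ)..t,
        Real.exp ((l1 - l0) * u) * (μ k * Real.exp (-μ k * u))) / N t) :
    Tendsto (x (Fin.last n)) atTop
        (nhds ((l1 - l0 - μ (Fin.last n)) / (l1 - l0))) ∧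
      Tendsto xΔ atTop (nhds (μ (Fin.last n) / (l1 - l0))) ∧
      ∀ i : Fin (n + 1), i < Fin.last n → Tendsto (x i) atTop (nhds 0) := by
  have hchange := Hyperexponential.tendsto_scaled_change_weight hμanti hrate π πΔ
  set m := μ (Fin.last n)
  set r := l1 - l0
  have hgap : 0 < r - m := sub_pos.2 hrate
  have hr : r ≠ 0 := (hμpos.trans hrate).ne'
  have hscale : ∀ t, Real.exp (m * t) ≠ 0 := fun t => (Real.exp_pos _).ne'
  have hmass : Tendsto (fun t => Real.exp (m * t) * N t) atTop
      (𝓝 (π (Fin.last n) + π (Fin.last n) * (m / (r - m)))) := by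
    simpa only [hN, mul_add] using
      (Hyperexponential.tendsto_scaled_phase_sum hμanti π).add hchange
  have hmass_ne : π (Fin.last n) + π (Fin.last n) * (m / (r - m)) ≠ 0 := by
    have := div_pos hμpos hgap
    positivity
  have hphase : ∀ i, Tendsto (x i) atTop (𝓝 ((if i = Fin.last n then π i else 0) /
      (π (Fin.last n) + π (Fin.last n) * (m / (r - m))))) := by
    intro i
    rw [funext (hx i)]
    exact (Hyperexponential.tendsto_scaled_phase_term hμanti (π i) i).div_of_mul_left
      hscale hmass hmass_ne
  refine ⟨?_, ?_, fun i hi => ?_⟩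
  · have h := hphase (Fin.last n)
    rw [if_pos rfl] at h
    convert h using 2
    field_simp
    ring
  · rw [funext hxΔ]
    convert hchange.div_of_mul_left hscale hmass hmass_ne using 2
    field_simp
    ring
  · simpa [hi.ne] using hphase i

/-- Hyperexponential prior with `λ₁ − λ₀ > μ_n`: on `{π_n ≠ 0}`,
`x_n(t,π) → (λ₁−λ₀−μ_n)/(λ₁−λ₀)`, `x_Δ(t,π) → μ_n/(λ₁−λ₀)`, and
`x_i(t,π) → 0` for `i < n`, as `t → ∞`. -/
theorem hyperexponential_limits_supercritical
    {n : ℕ} (μ : Fin (n + 1) → ℝ) (hμanti : StrictAnti μ)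
    (hμpos : 0 < μ (Fin.last n))
    (l0 l1 : ℝ) (h0 : 0 < l0) (h1 : 0 < l1)
    (hrate : μ (Fin.last n) < l1 - l0)
    (π : Fin (n + 1) → ℝ) (πΔ : ℝ)
    (hπ0 : ∀ i, 0 ≤ π i) (hπΔ0 : 0 ≤ πΔ)
    (hsum : (∑ i, π i) + πΔ = 1)
    (hπn : 0 < π (Fin.last n)) (hπΔ1 : πΔ ≠ 1)
    (N : ℝ → ℝ)
    (hN : ∀ t, N t = (∑ k, π k * Real.exp (-μ k * t)) +
      Real.exp (-(l1 - l0) * t) *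
        (πΔ + ∑ k, π k * ∫ u in (0:ℝ)..t,
          Real.exp ((l1 - l0) * u) * (μ k * Real.exp (-μ k * u))))
    (x : Fin (n + 1) → ℝ → ℝ)
    (hx : ∀ i t, x i t = π i * Real.exp (-μ i * t) / N t)
    (xΔ : ℝ → ℝ)
    (hxΔ : ∀ t, xΔ t = Real.exp (-(l1 - l0) * t) *
      (πΔ + ∑ k, π k * ∫ u in (0:ℝ)..t,
        Real.exp ((l1 - l0) * u) * (μ k * Real.exp (-μ k * u))) / N t) :
    Tendsto (x (Fin.last n)) atTop
        (nhds ((l1 - l0 - μ (Fin.last n)) / (l1 - l0))) ∧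
      Tendsto xΔ atTop (nhds (μ (Fin.last n) / (l1 - l0))) ∧
      ∀ i : Fin (n + 1), i < Fin.last n → Tendsto (x i) atTop (nhds 0) :=
  hyperexponential_limits_supercritical_general μ hμanti hμpos l0 l1 hrate π πΔ hπn N hN x hx xΔ hxΔ
end

section
/- For the hyperexponential model with λ₁ − λ₀ ≤ μ_n (and λ₁ > λ₀ or otherwise appropriately interpreted), for any π in the simplex with π_n > 0 and π ≠ 1, lim_{t→∞} x_Δ(t,π) = 1. -/
open Filter Topology

/-!
Write `x_Δ = A / (B + A)` with `B t = ∑ π_k e^{-μ_k t}`. Since `λ₁ - λ₀ ≤ μ_k`, the integrand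
`e^{(λ₁-λ₀)u} μ_k e^{-μ_k u}` is nonincreasing in `u`, so its integral over `[0, t]` is at least
`t` times its value at `t`. This gives `A t ≥ μ_n t B t`, hence
`1 - x_Δ t = B t / (B t + A t) ≤ 1 / (1 + μ_n t) → 0`, uniformly in the subcritical and
critical cases.
-/

theorem tendsto_div_add_nhds_one {α : Type*} {l : Filter α} {A B a : α → ℝ}
    (hB : ∀ᶠ x in l, 0 < B x) (ha : Tendsto a l atTop) (hAB : ∀ᶠ x in l, a x * B x ≤ A x) :
    Tendsto (fun x => A x / (B x + A x)) l (𝓝 1) := by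
  have hlower : Tendsto (fun x => 1 - (1 + a x)⁻¹) l (𝓝 1) := by
    simpa using tendsto_const_nhds.sub (tendsto_atTop_add_const_left l 1 ha).inv_tendsto_atTop
  refine tendsto_of_tendsto_of_tendsto_of_le_of_le' hlower tendsto_const_nhds ?_ ?_
  all_goals
    filter_upwards [hB, hAB, ha.eventually_ge_atTop 0] with x hBx hABx hax
    have hA : 0 ≤ A x := (mul_nonneg hax hBx.le).trans hABx
  · rw [show 1 - (1 + a x)⁻¹ = a x / (1 + a x) by field_simp; ring,
      div_le_div_iff₀ (by positivity) (by positivity)]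
    linarith
  · rw [div_le_one (by positivity)]
    linarith

theorem mul_mul_exp_neg_le_exp_neg_mul_integral {Δ m t : ℝ} (hm : 0 ≤ m) (hΔm : Δ ≤ m)
    (ht : 0 ≤ t) :
    t * (m * Real.exp (-m * t)) ≤
      Real.exp (-Δ * t) * ∫ u in (0:ℝ)..t, Real.exp (Δ * u) * (m * Real.exp (-m * u)) := by
  have hbound : ∀ u ∈ Set.Icc 0 t,
      m * Real.exp ((Δ - m) * t) ≤ Real.exp (Δ * u) * (m * Real.exp (-m * u)) := by
    rintro u ⟨-, hut⟩
    rw [mul_left_comm, ← Real.exp_add, show Δ * u + -m * u = (Δ - m) * u by ring]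
    gcongr m * Real.exp ?_
    exact mul_le_mul_of_nonpos_left hut (by linarith)
  have hcont : Continuous fun u => Real.exp (Δ * u) * (m * Real.exp (-m * u)) := by fun_prop
  have hint := intervalIntegral.integral_mono_on (μ := MeasureTheory.volume) ht
    intervalIntegrable_const (hcont.intervalIntegrable 0 t) hbound
  rw [intervalIntegral.integral_const, smul_eq_mul, sub_zero] at hint
  calc t * (m * Real.exp (-m * t))
      = Real.exp (-Δ * t) * (t * (m * Real.exp ((Δ - m) * t))) := by
        rw [mul_left_comm (Real.exp _), mul_left_comm (Real.exp _), ← Real.exp_add]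
        ring_nf
    _ ≤ _ := by gcongr

theorem hyperexponential_limit_subcritical_general
    {n : ℕ} (μ : Fin (n + 1) → ℝ) (hμanti : StrictAnti μ)
    (hμpos : 0 < μ (Fin.last n))
    (l0 l1 : ℝ)
    (hrate : 0 ≤ μ (Fin.last n) - (l1 - l0))
    (π : Fin (n + 1) → ℝ) (πΔ : ℝ)
    (hπ0 : ∀ i, 0 ≤ π i) (hπΔ0 : 0 ≤ πΔ)
    (hπn : 0 < π (Fin.last n))
    (N : ℝ → ℝ)
    (hN : ∀ t, N t = (∑ k, π k * Real.exp (-μ k * t)) +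
      Real.exp (-(l1 - l0) * t) *
        (πΔ + ∑ k, π k * ∫ u in (0:ℝ)..t,
          Real.exp ((l1 - l0) * u) * (μ k * Real.exp (-μ k * u))))
    (xΔ : ℝ → ℝ)
    (hxΔ : ∀ t, xΔ t = Real.exp (-(l1 - l0) * t) *
      (πΔ + ∑ k, π k * ∫ u in (0:ℝ)..t,
        Real.exp ((l1 - l0) * u) * (μ k * Real.exp (-μ k * u))) / N t) :
    Tendsto xΔ atTop (nhds 1) := by
  have hμ_ge : ∀ k, μ (Fin.last n) ≤ μ k := fun k => hμanti.antitone (Fin.le_last k)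
  simp only [funext fun t => (hN t ▸ hxΔ t :)]
  refine tendsto_div_add_nhds_one (a := fun t => μ (Fin.last n) * t)
    (Eventually.of_forall fun t => ?_) (tendsto_id.const_mul_atTop hμpos) ?_
  · exact Finset.sum_pos' (fun k _ => mul_nonneg (hπ0 k) (Real.exp_pos _).le)
      ⟨Fin.last n, Finset.mem_univ _, mul_pos hπn (Real.exp_pos _)⟩
  filter_upwards [eventually_ge_atTop 0] with t ht
  calc μ (Fin.last n) * t * ∑ k, π k * Real.exp (-μ k * t)
      ≤ ∑ k, π k * (t * (μ k * Real.exp (-μ k * t))) := by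
        rw [Finset.mul_sum]
        refine Finset.sum_le_sum fun k _ => ?_
        calc _ = π k * (t * (μ (Fin.last n) * Real.exp (-μ k * t))) := by ring
          _ ≤ _ := by gcongr; exacts [hπ0 k, hμ_ge k]
    _ ≤ ∑ k, π k * (Real.exp (-(l1 - l0) * t) *
          ∫ u in (0:ℝ)..t, Real.exp ((l1 - l0) * u) * (μ k * Real.exp (-μ k * u))) := by
        refine Finset.sum_le_sum fun k _ => mul_le_mul_of_nonneg_left ?_ (hπ0 k)
        exact mul_mul_exp_neg_le_exp_neg_mul_integral (hμpos.trans_le (hμ_ge k)).le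
          (by linarith [hμ_ge k]) ht
    _ ≤ _ := by
        rw [mul_add, Finset.mul_sum]
        simp only [mul_left_comm (Real.exp _)]
        exact le_add_of_nonneg_left (by positivity)

/-- Hyperexponential model with `μ_n − (λ₁ − λ₀) ≥ 0`: for any `π` in the
simplex with `π_n > 0` and `π_Δ ≠ 1`, `x_Δ(t,π) → 1` as `t → ∞`. -/
theorem hyperexponential_limit_subcritical
    {n : ℕ} (μ : Fin (n + 1) → ℝ) (hμanti : StrictAnti μ)
    (hμpos : 0 < μ (Fin.last n))
    (l0 l1 : ℝ) (h0 : 0 < l0) (h1 : 0 < l1)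
    (hrate : 0 ≤ μ (Fin.last n) - (l1 - l0))
    (π : Fin (n + 1) → ℝ) (πΔ : ℝ)
    (hπ0 : ∀ i, 0 ≤ π i) (hπΔ0 : 0 ≤ πΔ)
    (hsum : (∑ i, π i) + πΔ = 1)
    (hπn : 0 < π (Fin.last n)) (hπΔ1 : πΔ ≠ 1)
    (N : ℝ → ℝ)
    (hN : ∀ t, N t = (∑ k, π k * Real.exp (-μ k * t)) +
      Real.exp (-(l1 - l0) * t) *
        (πΔ + ∑ k, π k * ∫ u in (0:ℝ)..t,
          Real.exp ((l1 - l0) * u) * (μ k * Real.exp (-μ k * u))))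
    (xΔ : ℝ → ℝ)
    (hxΔ : ∀ t, xΔ t = Real.exp (-(l1 - l0) * t) *
      (πΔ + ∑ k, π k * ∫ u in (0:ℝ)..t,
        Real.exp ((l1 - l0) * u) * (μ k * Real.exp (-μ k * u))) / N t) :
    Tendsto xΔ atTop (nhds 1) :=
  hyperexponential_limit_subcritical_general μ hμanti hμpos l0 l1 hrate π πΔ hπ0 hπΔ0 hπn N hN xΔ
    hxΔ
end
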